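/- Under the assumption that X₀,…,X_{n-1} are i.i.d. complex random variables with |X_i| = 1, the median m_n and expected value of the crest factor CF_n(s) of an OFDM signal with n sub-carriers differ by at most 8√π, uniformly in n. -/

import Mathlib

/-!
Changing one symbol `X i` moves the crest factor by at most `2 / √n`, so the Efron–Stein
(bounded differences) inequality bounds its variance by `n * (2 / √n) ^ 2 = 4`. Chebyshev's
inequality then bounds the distance between mean and median: if `|E - m| = d > 0`, at least half
of the mass deviates from the mean by `d`, so `d ^ 2 / 2 ≤ Var ≤ 4` and `d ≤ √8 < 8 √π`.
-/

open MeasureTheory Finset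

noncomputable def ofdm (n : ℕ) (T : ℝ) (x : Fin n → ℂ) (t : ℝ) : ℂ :=
  ((Real.sqrt n : ℝ) : ℂ)⁻¹ *
    ∑ i : Fin n, x i * Complex.exp (Complex.I * ((2 * Real.pi * (i : ℕ) * t / T : ℝ) : ℂ))

noncomputable def crest (n : ℕ) (T : ℝ) (x : Fin n → ℂ) : ℝ :=
  sSup ((fun t => ‖ofdm n T x t‖) '' Set.Icc (0 : ℝ) T)

open ProbabilityTheory

lemma memLp_of_abs_le {α : Type*} [MeasurableSpace α] {μ : Measure α} [IsFiniteMeasure μ]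
    {f : α → ℝ} (hf : Measurable f) {B : ℝ} (hB : ∀ x, |f x| ≤ B) (p : ENNReal) :
    MemLp f p μ :=
  memLp_of_bounded (ae_of_all _ fun x => abs_le.1 (hB x)) hf.aestronglyMeasurable p

lemma abs_integral_le_of_abs_le {α : Type*} [MeasurableSpace α] {μ : Measure α}
    [IsProbabilityMeasure μ] {f : α → ℝ} {B : ℝ} (hB : ∀ x, |f x| ≤ B) :
    |∫ x, f x ∂μ| ≤ B := by
  simpa using norm_integral_le_of_norm_le_const (μ := μ) (f := f) (C := B)
    (ae_of_all _ fun x => (Real.norm_eq_abs _).trans_le (hB x))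

section ProductVariance

variable {α β : Type*} [MeasurableSpace α] [MeasurableSpace β]
  {μ : Measure α} {ν : Measure β} [IsProbabilityMeasure μ] [IsProbabilityMeasure ν]

theorem variance_prod_eq {h : α × β → ℝ} (hh : Measurable h) {B : ℝ}
    (hB : ∀ p, |h p| ≤ B) :
    Var[h; μ.prod ν] =
      ∫ a, Var[fun b => h (a, b); ν] ∂μ + Var[fun a => ∫ b, h (a, b) ∂ν; μ] := by
  have hmean : Measurable fun a => ∫ b, h (a, b) ∂ν :=
    hh.stronglyMeasurable.integral_prod_right'.measurable
  have hh2 : Integrable (fun p => h p ^ 2) (μ.prod ν) := (memLp_of_abs_le hh hB 2).integrable_sq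
  have hslice (a : α) : Var[fun b => h (a, b); ν] =
      ∫ b, h (a, b) ^ 2 ∂ν - (∫ b, h (a, b) ∂ν) ^ 2 :=
    variance_eq_sub (memLp_of_abs_le (hh.comp measurable_prodMk_left) (fun b => hB _) 2)
  rw [variance_eq_sub (memLp_of_abs_le hh hB 2),
    variance_eq_sub (memLp_of_abs_le hmean (fun a => abs_integral_le_of_abs_le fun b => hB _) 2)]
  simp only [Pi.pow_apply]
  rw [integral_congr_ae (ae_of_all _ hslice), integral_sub hh2.integral_prod_left
      (memLp_of_abs_le hmean (fun a => abs_integral_le_of_abs_le fun b => hB _) 2).integrable_sq,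
    integral_prod _ hh2, integral_prod _ ((memLp_of_abs_le hh hB 2).integrable one_le_two)]
  ring

end ProductVariance

lemma variance_le_sq_of_abs_sub_le {α : Type*} [MeasurableSpace α] {μ : Measure α}
    [IsProbabilityMeasure μ] {g : α → ℝ} (hg : AEMeasurable g μ) {c : ℝ}
    (hc : ∀ a b, |g a - g b| ≤ c) : Var[g; μ] ≤ c ^ 2 := by
  obtain ⟨a₀⟩ := nonempty_of_isProbabilityMeasure μ
  have hIcc : ∀ᵐ a ∂μ, g a ∈ Set.Icc (g a₀ - c) (g a₀ + c) :=
    ae_of_all _ fun a => by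
      have := abs_le.1 (hc a a₀)
      constructor <;> linarith
  calc Var[g; μ] ≤ ((g a₀ + c - (g a₀ - c)) / 2) ^ 2 := variance_le_sq_of_bounded hIcc hg
    _ = c ^ 2 := by ring

theorem abs_integral_sub_le_sqrt_two_mul_variance {Ω : Type*} [MeasurableSpace Ω]
    {μ : Measure Ω} [IsProbabilityMeasure μ] {G : Ω → ℝ} (hG : MemLp G 2 μ) {m : ℝ}
    (h₁ : 1 / 2 ≤ μ.real {ω | G ω ≤ m}) (h₂ : 1 / 2 ≤ μ.real {ω | m ≤ G ω}) :
    |μ[G] - m| ≤ Real.sqrt (2 * Var[G; μ]) := by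
  set d := |μ[G] - m| with hd_def
  rcases (abs_nonneg (μ[G] - m)).eq_or_lt with hd | hd
  · rw [hd_def, ← hd]; positivity
  have hcheb : μ.real {ω | d ≤ |G ω - μ[G]|} ≤ Var[G; μ] / d ^ 2 :=
    ENNReal.toReal_le_of_le_ofReal (by have := variance_nonneg G μ; positivity)
      (meas_ge_le_variance_div_sq hG hd)
  have hhalf : 1 / 2 ≤ μ.real {ω | d ≤ |G ω - μ[G]|} := by
    rcases le_total m μ[G] with hm | hm
    · refine h₁.trans (measureReal_mono fun ω (hω : G ω ≤ m) => ?_)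
      show d ≤ |G ω - μ[G]|
      rw [hd_def, abs_of_nonneg (sub_nonneg.2 hm), abs_sub_comm, abs_of_nonneg (by linarith)]
      linarith
    · refine h₂.trans (measureReal_mono fun ω (hω : m ≤ G ω) => ?_)
      show d ≤ |G ω - μ[G]|
      rw [hd_def, abs_of_nonpos (sub_nonpos.2 hm), abs_of_nonneg (by linarith)]
      linarith
  refine Real.le_sqrt_of_sq_le ?_
  have := (le_div_iff₀ (by positivity)).1 (hhalf.trans hcheb)
  linarith

lemma measurePreserving_finCons {α : Type*} [MeasurableSpace α] {n : ℕ}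
    (ν : Fin (n + 1) → Measure α) [∀ i, SigmaFinite (ν i)] :
    MeasurePreserving (fun p : α × (Fin n → α) => (Fin.cons p.1 p.2 : Fin (n + 1) → α))
      ((ν 0).prod (Measure.pi fun j => ν j.succ)) (Measure.pi ν) := by
  convert (measurePreserving_piFinSuccAbove ν 0).symm using 1
  · ext p : 1
    simp [MeasurableEquiv.piFinSuccAbove, Fin.insertNthEquiv]
  · simp

theorem variance_pi_le_of_abs_update_sub_le {α : Type*} [MeasurableSpace α] {n : ℕ}
    (ν : Fin n → Measure α) [∀ i, IsProbabilityMeasure (ν i)] {f : (Fin n → α) → ℝ}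
    (hf : Measurable f) {B : ℝ} (hB : ∀ x, |f x| ≤ B) {c : ℝ}
    (hc : ∀ x i a b, |f (Function.update x i a) - f (Function.update x i b)| ≤ c) :
    Var[f; Measure.pi ν] ≤ n * c ^ 2 := by
  induction n with
  | zero =>
    simpa using variance_le_sq_of_abs_sub_le hf.aemeasurable (μ := Measure.pi ν) (c := 0)
      fun x y => by simp [Subsingleton.elim x y]
  | succ n ih =>
    have hcons := measurePreserving_finCons ν
    have hfc : Measurable fun p : α × (Fin n → α) => f (Fin.cons p.1 p.2) :=
      hf.comp hcons.measurable
    have hslice (a : α) :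
        Var[fun y => f (Fin.cons a y); Measure.pi fun j => ν j.succ] ≤ n * c ^ 2 :=
      ih _ (hfc.comp measurable_prodMk_left) (fun y => hB _) fun y i a' b' => by
        simpa only [Fin.cons_update] using hc (Fin.cons a y) i.succ a' b'
    have hmean :
        Var[fun a => ∫ y, f (Fin.cons a y) ∂Measure.pi fun j => ν j.succ; ν 0] ≤ c ^ 2 := by
      refine variance_le_sq_of_abs_sub_le
        hfc.stronglyMeasurable.integral_prod_right'.measurable.aemeasurable fun a a' => ?_
      have hint (b : α) : Integrable (fun y => f (Fin.cons b y)) (Measure.pi fun j => ν j.succ) :=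
        (memLp_of_abs_le (hfc.comp measurable_prodMk_left) (fun y => hB _) 1).integrable le_rfl
      rw [← integral_sub (hint a) (hint a')]
      exact abs_integral_le_of_abs_le fun y => by
        simpa only [Fin.update_cons_zero] using hc (Fin.cons a' y) 0 a a'
    rw [← hcons.variance_fun_comp hf.aemeasurable, variance_prod_eq hfc (fun p => hB _)]
    calc _ ≤ ∫ _, (n : ℝ) * c ^ 2 ∂ν 0 + c ^ 2 :=
          add_le_add (integral_mono_of_nonneg (ae_of_all _ fun a => variance_nonneg _ _)
            (integrable_const _) (ae_of_all _ hslice)) hmean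
      _ = (n + 1 : ℕ) * c ^ 2 := by
          rw [integral_const, probReal_univ, one_smul]; push_cast; ring

-- The `X j` are unimodular only almost surely; retracting onto the circle makes the
-- bounded-difference estimate hold everywhere.
noncomputable def circleRetraction (z : ℂ) : ℂ := if ‖z‖ = 1 then z else 1

lemma circleRetraction_of_norm_eq_one {z : ℂ} (hz : ‖z‖ = 1) : circleRetraction z = z :=
  if_pos hz

lemma norm_circleRetraction (z : ℂ) : ‖circleRetraction z‖ = 1 := by
  unfold circleRetraction; split_ifs with hz <;> simp [hz]

lemma measurable_circleRetraction : Measurable circleRetraction :=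
  Measurable.ite (measurableSet_eq_fun measurable_norm measurable_const) measurable_id
    measurable_const

section Crest

variable {n : ℕ} {T : ℝ}

lemma norm_ofdm_le (x : Fin n → ℂ) (t : ℝ) :
    ‖ofdm n T x t‖ ≤ (Real.sqrt n)⁻¹ * ∑ i, ‖x i‖ := by
  rw [ofdm, norm_mul, norm_inv, Complex.norm_real, Real.norm_of_nonneg (Real.sqrt_nonneg _)]
  gcongr
  refine (norm_sum_le _ _).trans_eq (sum_congr rfl fun i _ => ?_)
  rw [norm_mul, Complex.norm_exp_I_mul_ofReal, mul_one]

lemma ofdm_sub (x y : Fin n → ℂ) (t : ℝ) :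
    ofdm n T x t - ofdm n T y t = ofdm n T (x - y) t := by
  simp only [ofdm, ← mul_sub, ← sum_sub_distrib, Pi.sub_apply, sub_mul]

lemma crest_nonneg (x : Fin n → ℂ) : 0 ≤ crest n T x :=
  Real.sSup_nonneg <| by rintro _ ⟨t, -, rfl⟩; exact norm_nonneg _

lemma crest_le (x : Fin n → ℂ) : crest n T x ≤ (Real.sqrt n)⁻¹ * ∑ i, ‖x i‖ :=
  Real.sSup_le (by rintro _ ⟨t, -, rfl⟩; exact norm_ofdm_le x t) (by positivity)

lemma norm_ofdm_le_crest (x : Fin n → ℂ) {t : ℝ} (ht : t ∈ Set.Icc 0 T) :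
    ‖ofdm n T x t‖ ≤ crest n T x :=
  le_csSup ⟨_, by rintro _ ⟨s, -, rfl⟩; exact norm_ofdm_le x s⟩ ⟨t, ht, rfl⟩

lemma crest_sub_le (x y : Fin n → ℂ) :
    crest n T x - crest n T y ≤ (Real.sqrt n)⁻¹ * ∑ i, ‖x i - y i‖ := by
  rw [sub_le_iff_le_add']
  refine Real.sSup_le (fun _ ⟨t, ht, hxt⟩ => hxt ▸ ?_)
    (by have := crest_nonneg (T := T) y; positivity)
  calc ‖ofdm n T x t‖ ≤ ‖ofdm n T y t‖ + ‖ofdm n T x t - ofdm n T y t‖ :=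
        norm_le_insert' _ _
    _ ≤ crest n T y + (Real.sqrt n)⁻¹ * ∑ i, ‖x i - y i‖ := by
      rw [ofdm_sub]
      exact add_le_add (norm_ofdm_le_crest y ht) (norm_ofdm_le _ t)

lemma abs_crest_sub_le (x y : Fin n → ℂ) :
    |crest n T x - crest n T y| ≤ (Real.sqrt n)⁻¹ * ∑ i, ‖x i - y i‖ := by
  refine abs_sub_le_iff.2 ⟨crest_sub_le x y, ?_⟩
  simpa only [norm_sub_rev] using crest_sub_le (T := T) y x

lemma abs_crest_update_sub_le (x : Fin n → ℂ) (i : Fin n) (a b : ℂ) :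
    |crest n T (Function.update x i a) - crest n T (Function.update x i b)| ≤
      (Real.sqrt n)⁻¹ * ‖a - b‖ := by
  refine (abs_crest_sub_le _ _).trans_eq ?_
  rw [sum_eq_single i (fun j _ hj => by simp [Function.update_of_ne hj]) (by simp)]
  simp

lemma lipschitzWith_crest : LipschitzWith (NNReal.sqrt n) (crest n T) := by
  refine LipschitzWith.of_dist_le_mul fun x y => ?_
  calc dist (crest n T x) (crest n T y) ≤ (Real.sqrt n)⁻¹ * ∑ _i : Fin n, dist x y :=
        (abs_crest_sub_le x y).trans <| by
          gcongr with i; rw [← dist_eq_norm]; exact dist_le_pi_dist x y i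
    _ = NNReal.sqrt n * dist x y := by
        rw [sum_const, card_univ, Fintype.card_fin, nsmul_eq_mul, ← mul_assoc, Real.coe_sqrt,
          NNReal.coe_natCast, ← div_eq_inv_mul, Real.div_sqrt]

lemma measurable_crest_comp_circleRetraction :
    Measurable fun x : Fin n → ℂ => crest n T (circleRetraction ∘ x) :=
  lipschitzWith_crest.continuous.measurable.comp <|
    measurable_pi_lambda _ fun j => measurable_circleRetraction.comp (measurable_pi_apply j)

lemma abs_crest_comp_circleRetraction_le (x : Fin n → ℂ) :
    |crest n T (circleRetraction ∘ x)| ≤ (Real.sqrt n)⁻¹ * n := by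
  rw [abs_of_nonneg (crest_nonneg _)]
  simpa [norm_circleRetraction] using crest_le (T := T) (circleRetraction ∘ x)

lemma variance_crest_comp_circleRetraction_le (ν : Fin n → Measure ℂ)
    [∀ i, IsProbabilityMeasure (ν i)] :
    Var[fun x => crest n T (circleRetraction ∘ x); Measure.pi ν] ≤ 4 := by
  refine (variance_pi_le_of_abs_update_sub_le ν
    (f := fun x => crest n T (circleRetraction ∘ x))
    measurable_crest_comp_circleRetraction abs_crest_comp_circleRetraction_le
    (c := 2 * (Real.sqrt n)⁻¹) fun x i a b => ?_).trans ?_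
  · rw [Function.comp_update, Function.comp_update]
    calc _ ≤ (Real.sqrt n)⁻¹ * ‖circleRetraction a - circleRetraction b‖ :=
          abs_crest_update_sub_le _ i _ _
      _ ≤ (Real.sqrt n)⁻¹ * 2 := by
          gcongr
          exact (norm_sub_le _ _).trans_eq (by simp [norm_circleRetraction]; norm_num)
      _ = 2 * (Real.sqrt n)⁻¹ := mul_comm _ _
  · calc (n : ℝ) * (2 * (Real.sqrt n)⁻¹) ^ 2 = 4 * ((n : ℝ)⁻¹ * n) := by
          rw [mul_pow, inv_pow, Real.sq_sqrt n.cast_nonneg]; ring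
      _ ≤ 4 := mul_le_of_le_one_right (by norm_num) inv_mul_le_one

end Crest

theorem stmt_12_general {Ω : Type*} [MeasurableSpace Ω] (μ : Measure Ω) [IsProbabilityMeasure μ]
    (n : ℕ) (T : ℝ)
    (X : Fin n → Ω → ℂ) (hmeas : ∀ j, Measurable (X j))
    (hindep : ProbabilityTheory.iIndepFun X μ)
    (hunit : ∀ j, ∀ᵐ ω ∂μ, ‖X j ω‖ = 1)
    (m : ℝ)
    (hm₁ : (1 : ℝ) / 2 ≤ (μ {ω | crest n T (fun j => X j ω) ≤ m}).toReal)
    (hm₂ : (1 : ℝ) / 2 ≤ (μ {ω | m ≤ crest n T (fun j => X j ω)}).toReal) :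
    |(∫ ω, crest n T (fun j => X j ω) ∂μ) - m| ≤ 8 * Real.sqrt Real.pi := by
  set g : (Fin n → ℂ) → ℝ := fun x => crest n T (circleRetraction ∘ x)
  have hJ : Measurable fun ω j => X j ω := measurable_pi_lambda _ hmeas
  have hg : Measurable g := measurable_crest_comp_circleRetraction
  have hae : (fun ω => crest n T (fun j => X j ω)) =ᵐ[μ] fun ω => g (fun j => X j ω) := by
    filter_upwards [ae_all_iff.2 hunit] with ω hω
    exact congrArg (crest n T) (funext fun j => (circleRetraction_of_norm_eq_one (hω j)).symm)
  have hvar : Var[fun ω => crest n T (fun j => X j ω); μ] ≤ 4 := by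
    rw [variance_congr hae, ← Function.comp_def g,
      ← variance_map hg.aemeasurable hJ.aemeasurable,
      hindep.map_fun_eq_pi_map fun j => (hmeas j).aemeasurable]
    have (j : Fin n) : IsProbabilityMeasure (μ.map (X j)) :=
      Measure.isProbabilityMeasure_map (hmeas j).aemeasurable
    exact variance_crest_comp_circleRetraction_le _
  have hL2 : MemLp (fun ω => crest n T (fun j => X j ω)) 2 μ :=
    (memLp_of_abs_le (hg.comp hJ) (fun ω => abs_crest_comp_circleRetraction_le _) 2).ae_eq hae.symm
  calc _ ≤ Real.sqrt (2 * Var[fun ω => crest n T (fun j => X j ω); μ]) :=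
        abs_integral_sub_le_sqrt_two_mul_variance hL2 hm₁ hm₂
    _ ≤ 8 * Real.sqrt Real.pi := by
        rw [Real.sqrt_le_iff, mul_pow, Real.sq_sqrt Real.pi_pos.le]
        exact ⟨by positivity, by nlinarith [hvar, Real.pi_gt_three]⟩

theorem stmt_12 {Ω : Type*} [MeasurableSpace Ω] (μ : Measure Ω) [IsProbabilityMeasure μ]
    (n : ℕ) (hn : 0 < n) (T : ℝ) (hT : 0 < T)
    (X : Fin n → Ω → ℂ) (hmeas : ∀ j, Measurable (X j))
    (hindep : ProbabilityTheory.iIndepFun X μ)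
    (hident : ∀ i j, Measure.map (X i) μ = Measure.map (X j) μ)
    (hunit : ∀ j, ∀ᵐ ω ∂μ, ‖X j ω‖ = 1)
    (m : ℝ)
    (hm₁ : (1 : ℝ) / 2 ≤ (μ {ω | crest n T (fun j => X j ω) ≤ m}).toReal)
    (hm₂ : (1 : ℝ) / 2 ≤ (μ {ω | m ≤ crest n T (fun j => X j ω)}).toReal) :
    |(∫ ω, crest n T (fun j => X j ω) ∂μ) - m| ≤ 8 * Real.sqrt Real.pi :=
  stmt_12_general μ n T X hmeas hindep hunit m hm₁ hm₂
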